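/- Let H, U, Y be complex Hilbert spaces, A : H → H, B : U → H, C : H → Y, K : U → U bounded linear operators with (A,B) exponentially stabilizable, and z ∈ H, v ∈ U. Let (x_e, u_e) ∈ H × U satisfy Ax_e + Bu_e = 0 and suppose the pair (z + C*C x_e, v + K*K u_e) ∈ H × U is orthogonal to the kernel of the map (x,u) ↦ Ax + Bu (the optimality condition for the optimal steady state problem). Then there exists w ∈ H with A*w = z + C*C x_e and B*w = v + K*K u_e. -/

import Mathlib

open MeasureTheory ContinuousLinearMap
open scoped InnerProductSpace

noncomputable section

variable {H U Y : Type*}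
  [NormedAddCommGroup H] [InnerProductSpace ℂ H] [CompleteSpace H]
  [NormedAddCommGroup U] [InnerProductSpace ℂ U] [CompleteSpace U]
  [NormedAddCommGroup Y] [InnerProductSpace ℂ Y] [CompleteSpace Y]

/-- A bounded operator `G` generates an exponentially stable (uniformly continuous)
semigroup `t ↦ exp (t • G)`. -/
def ExpStable (G : H →L[ℂ] H) : Prop :=
  ∃ m > 0, ∃ ω > 0, ∀ t : ℝ, 0 ≤ t →
    ‖NormedSpace.exp (t • G)‖ ≤ m * Real.exp (-ω * t)

/-- Mild solution of `ẋ = A x + B u`, `x 0 = x₀`: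
`x t = exp (t A) x₀ + ∫₀ᵗ exp ((t - s) A) (B (u s)) ds`. -/
def mildSol (A : H →L[ℂ] H) (B : U →L[ℂ] H) (u : ℝ → U) (x₀ : H) (t : ℝ) : H :=
  NormedSpace.exp (t • A) x₀ +
    ∫ s in (0:ℝ)..t, NormedSpace.exp ((t - s) • A) (B (u s))

/-- Generalized linear-quadratic running cost
`ℓ(x,u) = ‖Cx‖² + ‖Ku‖² + 2 Re⟨z,x⟩ + 2 Re⟨v,u⟩`. -/
def runCost (C : H →L[ℂ] Y) (K : U →L[ℂ] U) (z : H) (v : U) (x : H) (u : U) : ℝ :=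
  ‖C x‖ ^ 2 + ‖K u‖ ^ 2 + 2 * (⟪z, x⟫_ℂ).re + 2 * (⟪v, u⟫_ℂ).re

/-- The cost functional `J_T(u) = ∫₀ᵀ ℓ(x(t), u(t)) dt` along the mild solution
with initial state `x₀`. -/
def costJ (A : H →L[ℂ] H) (B : U →L[ℂ] H) (C : H →L[ℂ] Y) (K : U →L[ℂ] U)
    (z : H) (v : U) (T : ℝ) (x₀ : H) (u : ℝ → U) : ℝ :=
  ∫ t in (0:ℝ)..T, runCost C K z v (mildSol A B u x₀ t) (u t)

/-!
If `A + B F` is exponentially stable it is invertible: were `0 ∈ σ(A + B F)`, then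
`1 = exp 0 ∈ σ(exp (t (A + B F)))`, so `1 ≤ ‖exp (t (A + B F))‖ ≤ m e^{-ωt}` for all `t ≥ 0`.
Hence `[A B]` has the bounded right inverse `y ↦ (S y, T y) = (G⁻¹ y, F G⁻¹ y)` with
`G = A + B F`. For `(p, q) ⊥ ker [A B]` put `w = S* p + T* q`: since
`(x - S (A x + B u), u - T (A x + B u)) ∈ ker [A B]`, we get
`⟪A x + B u, w⟫ = ⟪x, p⟫ + ⟪u, q⟫`, i.e. `A* w = p` and `B* w = q`.
-/

section ExpSpectrum

variable {A : Type*} [NormedRing A] [NormedAlgebra ℝ A] [CompleteSpace A]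
  [NormOneClass A]

lemma isUnit_of_norm_exp_lt_one {b : A} (hb : ‖NormedSpace.exp b‖ < 1) : IsUnit b := by
  by_contra hunit
  have h1 : (1 : ℝ) ∈ spectrum ℝ (NormedSpace.exp b) := by
    simpa using spectrum.exp_mem_exp b (spectrum.zero_mem_iff ℝ |>.mpr hunit)
  exact hb.not_ge (by simpa using spectrum.norm_le_norm_of_mem h1)

end ExpSpectrum

lemma ExpStable.exists_norm_exp_lt_one {G : H →L[ℂ] H} (hG : ExpStable G) :
    ∃ t : ℝ, 0 < t ∧ ‖NormedSpace.exp (t • G)‖ < 1 := by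
  obtain ⟨m, -, ω, hω, hbound⟩ := hG
  have hdecay : Filter.Tendsto (fun t => m * Real.exp (-ω * t)) Filter.atTop (nhds 0) := by
    simpa using (Real.tendsto_exp_neg_atTop_nhds_zero.comp
      (Filter.tendsto_id.const_mul_atTop hω)).const_mul m
  obtain ⟨t, ht, hpos⟩ := ((hdecay.eventually (gt_mem_nhds one_pos)).and
    (Filter.eventually_gt_atTop 0)).exists
  exact ⟨t, hpos, (hbound t hpos.le).trans_lt ht⟩

lemma ExpStable.isUnit {G : H →L[ℂ] H} (hG : ExpStable G) : IsUnit G := by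
  rcases subsingleton_or_nontrivial H with _ | _
  · exact isUnit_of_subsingleton G
  obtain ⟨t, ht, hexp⟩ := hG.exists_norm_exp_lt_one
  have := isUnit_of_norm_exp_lt_one hexp
  rwa [← Units.val_mk0 ht.ne', ← Units.smul_def, isUnit_smul_iff] at this

section AdjointRange

variable {𝕜 E₁ E₂ F : Type*} [RCLike 𝕜]
  [NormedAddCommGroup E₁] [InnerProductSpace 𝕜 E₁] [CompleteSpace E₁]
  [NormedAddCommGroup E₂] [InnerProductSpace 𝕜 E₂] [CompleteSpace E₂]
  [NormedAddCommGroup F] [InnerProductSpace 𝕜 F] [CompleteSpace F]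

lemma exists_adjoint_eq_of_orthogonal_ker (A : E₁ →L[𝕜] F) (B : E₂ →L[𝕜] F)
    (S : F →L[𝕜] E₁) (T : F →L[𝕜] E₂) (hST : ∀ y, A (S y) + B (T y) = y) (p : E₁) (q : E₂)
    (horth : ∀ x u, A x + B u = 0 → ⟪x, p⟫_𝕜 + ⟪u, q⟫_𝕜 = 0) :
    ∃ w, adjoint A w = p ∧ adjoint B w = q := by
  set w := adjoint S p + adjoint T q
  have hw : ∀ x u, ⟪A x + B u, w⟫_𝕜 = ⟪x, p⟫_𝕜 + ⟪u, q⟫_𝕜 := by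
    intro x u
    set y := A x + B u
    have hker : A (x - S y) + B (u - T y) = 0 := by
      rw [map_sub, map_sub, sub_add_sub_comm, hST, sub_self]
    have := horth _ _ hker
    rw [inner_sub_left, inner_sub_left] at this
    rw [inner_add_right, adjoint_inner_right, adjoint_inner_right]
    linear_combination -this
  refine ⟨w, ext_inner_left 𝕜 fun x => ?_, ext_inner_left 𝕜 fun u => ?_⟩
  · simpa [adjoint_inner_right] using hw x 0
  · simpa [adjoint_inner_right] using hw 0 u

end AdjointRange

theorem adjoint_steady_state_exists_general
    (A : H →L[ℂ] H) (B : U →L[ℂ] H) (C : H →L[ℂ] Y) (K : U →L[ℂ] U) (z : H) (v : U)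
    (hstab : ∃ F : H →L[ℂ] U, ExpStable (A + B ∘L F))
    (xe : H) (ue : U)
    (horth : ∀ x : H, ∀ u : U, A x + B u = 0 →
      ⟪x, z + adjoint C (C xe)⟫_ℂ + ⟪u, v + adjoint K (K ue)⟫_ℂ = 0) :
    ∃ w : H, adjoint A w = z + adjoint C (C xe) ∧ adjoint B w = v + adjoint K (K ue) := by
  obtain ⟨F, hF⟩ := hstab
  obtain ⟨G, hG⟩ := hF.isUnit
  refine exists_adjoint_eq_of_orthogonal_ker A B ↑G⁻¹ (F ∘L ↑G⁻¹) (fun y => ?_) _ _ horth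
  simpa [hG] using congr($(G.mul_inv) y)

/-- if `(A,B)` is exponentially stabilizable and the optimality condition of
the optimal steady state problem holds, i.e. `(z + C*C x_e, v + K*K u_e)` is orthogonal to
`ker [A B]`, then there exists an adjoint steady state `w` with `A* w = z + C*C x_e` and
`B* w = v + K*K u_e`. -/
theorem adjoint_steady_state_exists
    (A : H →L[ℂ] H) (B : U →L[ℂ] H) (C : H →L[ℂ] Y) (K : U →L[ℂ] U) (z : H) (v : U)
    (hstab : ∃ F : H →L[ℂ] U, ExpStable (A + B ∘L F))
    (xe : H) (ue : U) (heq : A xe + B ue = 0)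
    (horth : ∀ x : H, ∀ u : U, A x + B u = 0 →
      ⟪x, z + adjoint C (C xe)⟫_ℂ + ⟪u, v + adjoint K (K ue)⟫_ℂ = 0) :
    ∃ w : H, adjoint A w = z + adjoint C (C xe) ∧ adjoint B w = v + adjoint K (K ue) :=
  adjoint_steady_state_exists_general A B C K z v hstab xe ue horth
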